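/- Let a, b ∈ ℝ^n be nonnegative vectors. For 1 ≤ p ≤ 2, over all permutations π, the quantity ∑_i (|a_i + b_{π(i)}|^p + |a_i − b_{π(i)}|^p) is minimized when a and b are similarly ordered (both decreasing) and maximized when oppositely ordered (a increasing, b decreasing); for p ≥ 2 the extremizers swap. -/

import Mathlib

open Finset

/-- A vector rearranged in increasing order. -/
noncomputable def ascSort {n : ℕ} (a : Fin n → ℝ) : Fin n → ℝ :=
  a ∘ Tuple.sort a

/-- A vector rearranged in decreasing order. -/
noncomputable def descSort {n : ℕ} (a : Fin n → ℝ) : Fin n → ℝ :=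
  fun i => ascSort a i.rev

/-- The sum of the entries of `a` with index at most `k`. -/
noncomputable def partialSum {n : ℕ} (a : Fin n → ℝ) (k : Fin n) : ℝ :=
  ∑ i ∈ Finset.univ.filter (fun i => i ≤ k), a i

/-- The product of the entries of `a` with index at most `k`. -/
noncomputable def partialProd {n : ℕ} (a : Fin n → ℝ) (k : Fin n) : ℝ :=
  ∏ i ∈ Finset.univ.filter (fun i => i ≤ k), a i

/-- Weak majorization: partial sums of the decreasing rearrangement of `a` are
bounded by those of `b`. -/
def WeakMaj {n : ℕ} (a b : Fin n → ℝ) : Prop :=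
  ∀ k : Fin n, partialSum (descSort a) k ≤ partialSum (descSort b) k

/-!
Write `F x y = |x + y| ^ p + |x - y| ^ p`. Both claims are rearrangement inequalities for cost
matrices with the Monge property `F x y + F x' y' ≤ F x y' + F x' y` (`x ≤ x'`, `y ≤ y'` in
`[0, ∞)`), for which the identity is an optimal assignment: uncrossing the pair through the least
moved point never increases the cost. For `1 < p ≤ 2` the exchange inequality holds because
`t ↦ F x' t - F x t` is antitone on `[0, ∞)`: its derivative is
`ψ (t + x') + ψ (t - x') - ψ (t + x) - ψ (t - x)` for the odd function `ψ z = p |z| ^ (p - 2) z`,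
which is concave on `[0, ∞)`. For `p ≥ 2`, `ψ` is convex there and every inequality reverses;
`p = 1` is the convexity of `|·|`.
-/

open Set Equiv

theorem ConvexOn.map_add_map_le_of_add_eq {s : Set ℝ} {f : ℝ → ℝ} (hf : ConvexOn ℝ s f)
    {a b c d : ℝ} (ha : a ∈ s) (hb : b ∈ s) (hac : a ≤ c) (hcb : c ≤ b) (hsum : c + d = a + b) :
    f c + f d ≤ f a + f b := by
  rcases hac.trans hcb |>.eq_or_lt with rfl | hab
  · obtain rfl : c = a := le_antisymm hcb hac
    obtain rfl : d = c := by linarith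
    rfl
  -- `c` and `d` are the convex combinations of `a` and `b` with swapped weights `t`, `1 - t`.
  set t := (b - c) / (b - a)
  have ht₀ : 0 ≤ t := div_nonneg (by linarith) (by linarith)
  have ht₁ : t ≤ 1 := (div_le_one (by linarith)).2 (by linarith)
  have hc : t • a + (1 - t) • b = c := by simp only [smul_eq_mul, t]; field_simp; ring
  have hd : (1 - t) • a + t • b = d := by
    simp only [smul_eq_mul] at hc ⊢; linarith
  have h₁ := hf.2 ha hb ht₀ (sub_nonneg.2 ht₁) (add_sub_cancel t 1)
  have h₂ := hf.2 ha hb (sub_nonneg.2 ht₁) ht₀ (sub_add_cancel 1 t)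
  rw [hc] at h₁
  rw [hd] at h₂
  simp only [smul_eq_mul] at h₁ h₂
  linarith

theorem ConcaveOn.map_add_map_le_of_add_eq {s : Set ℝ} {f : ℝ → ℝ} (hf : ConcaveOn ℝ s f)
    {a b c d : ℝ} (ha : a ∈ s) (hb : b ∈ s) (hac : a ≤ c) (hcb : c ≤ b) (hsum : c + d = a + b) :
    f a + f b ≤ f c + f d := by
  have := hf.neg.map_add_map_le_of_add_eq ha hb hac hcb hsum
  simp only [Pi.neg_apply] at this
  linarith

theorem ConcaveOn.antitoneOn_map_add_add_map_sub {ψ : ℝ → ℝ} (hψ : ConcaveOn ℝ (Ici 0) ψ)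
    (hodd : ∀ z, ψ (-z) = -ψ z) {t : ℝ} (ht : 0 ≤ t) :
    AntitoneOn (fun x => ψ (t + x) + ψ (t - x)) (Ici 0) := by
  intro x (hx : 0 ≤ x) x' _ hxx'
  have hψ₀ : ψ 0 = 0 := by have := hodd 0; rw [neg_zero] at this; linarith
  show ψ (t + x') + ψ (t - x') ≤ ψ (t + x) + ψ (t - x)
  rcases le_total t x with htx | hxt
  · have := hψ.map_add_map_le_of_add_eq (c := t + x) (d := x' - t) (a := x - t) (b := t + x')
      (sub_nonneg.2 htx) (Set.mem_Ici.2 (by linarith)) (by linarith) (by linarith) (by ring)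
    rw [← neg_sub x t, ← neg_sub x' t, hodd, hodd]
    linarith
  rcases le_total x' t with hx't | htx'
  · have := hψ.map_add_map_le_of_add_eq (c := t + x) (d := t - x) (a := t - x') (b := t + x')
      (sub_nonneg.2 hx't) (Set.mem_Ici.2 (by linarith)) (by linarith) (by linarith) (by ring)
    linarith
  -- For `x ≤ t ≤ x'`, use subadditivity of `ψ` on `[0, ∞)` twice, through `ψ (2 * t)`.
  · have h₁ := hψ.map_add_map_le_of_add_eq (c := x' - t) (d := 2 * t) (a := 0) (b := t + x')
      self_mem_Ici (Set.mem_Ici.2 (by linarith)) (by linarith) (by linarith) (by ring)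
    have h₂ := hψ.map_add_map_le_of_add_eq (c := t + x) (d := t - x) (a := 0) (b := 2 * t)
      self_mem_Ici (Set.mem_Ici.2 (by linarith)) (by linarith) (by linarith) (by ring)
    rw [← neg_sub x' t, hodd]
    linarith

theorem map_add_add_map_sub_exchange_le {φ ψ : ℝ → ℝ} (hφ : ∀ z, HasDerivAt φ (ψ z) z)
    (hψ : ConcaveOn ℝ (Ici 0) ψ) (hodd : ∀ z, ψ (-z) = -ψ z) {x x' y y' : ℝ}
    (hx : 0 ≤ x) (hxx' : x ≤ x') (hy : 0 ≤ y) (hyy' : y ≤ y') :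
    φ (x + y) + φ (x - y) + (φ (x' + y') + φ (x' - y')) ≤
      φ (x + y') + φ (x - y') + (φ (x' + y) + φ (x' - y)) := by
  set g := fun t => φ (x' + t) + φ (x' - t) - (φ (x + t) + φ (x - t))
  have hg : ∀ t, HasDerivAt g (ψ (x' + t) + -ψ (x' - t) - (ψ (x + t) + -ψ (x - t))) t := by
    intro t
    have hadd := fun c => (hφ (c + t)).comp_const_add c t
    have hsub := fun c => (hφ (c - t)).comp_const_sub c t
    exact ((hadd x').add (hsub x')).sub ((hadd x).add (hsub x))
  have hanti : AntitoneOn g (Ici 0) := by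
    refine antitoneOn_of_hasDerivWithinAt_nonpos (convex_Ici 0)
      (fun t _ => (hg t).continuousAt.continuousWithinAt) (fun t _ => (hg t).hasDerivWithinAt)
      fun t ht => ?_
    rw [interior_Ici] at ht
    have hψt : ∀ c, ψ (t - c) = -ψ (c - t) := fun c => by rw [← hodd, neg_sub]
    have := hψ.antitoneOn_map_add_add_map_sub hodd ht.le hx (hx.trans hxx') hxx'
    simp only [hψt, add_comm t] at this
    linarith
  have := hanti hy (hy.trans hyy') hyy'
  simp only [g] at this
  linarith

noncomputable def addSubRpow (p x y : ℝ) : ℝ := |x + y| ^ p + |x - y| ^ p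

theorem eqOn_abs_rpow_mul_self {p : ℝ} (hp : 1 < p) :
    EqOn (fun z => p * |z| ^ (p - 2) * z) (fun z => p * z ^ (p - 1)) (Ici 0) := by
  intro z (hz : 0 ≤ z)
  dsimp only
  rw [abs_of_nonneg hz, mul_assoc]
  rcases hz.eq_or_lt with rfl | hz
  · rw [mul_zero, Real.zero_rpow (by linarith), mul_zero]
  · rw [show p - 1 = p - 2 + 1 by ring, Real.rpow_add_one hz.ne']

theorem abs_rpow_mul_self_neg (p z : ℝ) :
    p * |-z| ^ (p - 2) * -z = -(p * |z| ^ (p - 2) * z) := by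
  rw [abs_neg]; ring

theorem addSubRpow_one_exchange_le {x x' y y' : ℝ} (hx : 0 ≤ x) (hxx' : x ≤ x') (hy : 0 ≤ y)
    (hyy' : y ≤ y') :
    addSubRpow 1 x y + addSubRpow 1 x' y' ≤ addSubRpow 1 x y' + addSubRpow 1 x' y := by
  have habs : |x - y| + |x' - y'| ≤ |x - y'| + |x' - y| := by
    simpa only [Real.norm_eq_abs] using convexOn_univ_norm.map_add_map_le_of_add_eq
      (mem_univ (x - y')) (mem_univ (x' - y)) (by linarith : x - y' ≤ x - y)
      (by linarith : x - y ≤ x' - y) (by ring : x - y + (x' - y') = x - y' + (x' - y))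
  simp only [addSubRpow, Real.rpow_one]
  rw [abs_of_nonneg (by linarith : 0 ≤ x + y), abs_of_nonneg (by linarith : 0 ≤ x' + y'),
    abs_of_nonneg (by linarith : 0 ≤ x + y'), abs_of_nonneg (by linarith : 0 ≤ x' + y)]
  linarith

theorem addSubRpow_exchange_le {p : ℝ} (hp₁ : 1 ≤ p) (hp₂ : p ≤ 2) {x x' y y' : ℝ} (hx : 0 ≤ x)
    (hxx' : x ≤ x') (hy : 0 ≤ y) (hyy' : y ≤ y') :
    addSubRpow p x y + addSubRpow p x' y' ≤ addSubRpow p x y' + addSubRpow p x' y := by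
  rcases hp₁.eq_or_lt with rfl | hp₁
  · exact addSubRpow_one_exchange_le hx hxx' hy hyy'
  have hψ : ConcaveOn ℝ (Ici 0) fun z => p * |z| ^ (p - 2) * z :=
    ((Real.concaveOn_rpow (by linarith) (by linarith)).smul (by linarith)).congr
      (eqOn_abs_rpow_mul_self hp₁).symm
  have := map_add_add_map_sub_exchange_le (fun z => hasDerivAt_abs_rpow z hp₁) hψ
    (abs_rpow_mul_self_neg p) hx hxx' hy hyy'
  simp only [addSubRpow]
  linarith

theorem addSubRpow_exchange_ge {p : ℝ} (hp : 2 ≤ p) {x x' y y' : ℝ} (hx : 0 ≤ x)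
    (hxx' : x ≤ x') (hy : 0 ≤ y) (hyy' : y ≤ y') :
    addSubRpow p x y' + addSubRpow p x' y ≤ addSubRpow p x y + addSubRpow p x' y' := by
  have hp₁ : 1 < p := by linarith
  have hψ : ConvexOn ℝ (Ici 0) fun z => p * |z| ^ (p - 2) * z :=
    ((convexOn_rpow (by linarith)).smul (by linarith)).congr (eqOn_abs_rpow_mul_self hp₁).symm
  have := map_add_add_map_sub_exchange_le (fun z => (hasDerivAt_abs_rpow z hp₁).neg) hψ.neg
    (fun z => by simp only [abs_rpow_mul_self_neg]) hx hxx' hy hyy'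
  simp only [addSubRpow, Pi.neg_apply] at this ⊢
  linarith

def IsMonge {ι κ : Type*} [Preorder ι] [Preorder κ] (G : ι → κ → ℝ) : Prop :=
  ∀ ⦃i j k l⦄, i ≤ j → k ≤ l → G i k + G j l ≤ G i l + G j k

namespace IsMonge

variable {ι : Type*} [Fintype ι] [LinearOrder ι] {G : ι → ι → ℝ}

theorem sum_apply_self_le (hG : IsMonge G) (σ : Perm ι) : ∑ i, G i i ≤ ∑ i, G i (σ i) := by
  induction hσ : #σ.support using Nat.strong_induction_on generalizing σ with
  | _ N ih =>
  subst hσ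
  rcases σ.support.eq_empty_or_nonempty with hsupp | hsupp
  · rw [Perm.support_eq_empty_iff.1 hsupp]; rfl
  -- As `x` is the least moved point, both `σ x` and `j = σ⁻¹ x` lie above it.
  set x := σ.support.min' hsupp
  have hx : σ x ≠ x := Perm.mem_support.1 (min'_mem _ _)
  set j := σ⁻¹ x
  have hxσx : x ≤ σ x := min'_le _ _ (Perm.apply_mem_support.2 (min'_mem _ _))
  have hσj : σ j = x := by simp [j]
  have hjx : j ≠ x := fun h => hx (by rw [← h, hσj, h])
  have hxj : x ≤ j := min'_le _ _ (Perm.mem_support.2 (hσj.trans_ne hjx.symm))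
  set τ := swap x (σ x) * σ
  have hτ : τ = σ * swap j x := by simp [τ, j, swap_mul_eq_mul_swap]
  have split : ∀ f : ι → ℝ, ∑ i, f i = f j + f x + ∑ i ∈ {j, x}ᶜ, f i := fun f => by
    rw [← sum_pair hjx, sum_add_sum_compl]
  have hcompl : ∑ i ∈ {j, x}ᶜ, G i (τ i) = ∑ i ∈ {j, x}ᶜ, G i (σ i) := by
    refine sum_congr rfl fun i hi => ?_
    simp only [Finset.mem_compl, Finset.mem_insert, Finset.mem_singleton, not_or] at hi
    rw [hτ, Perm.mul_apply, swap_apply_of_ne_of_ne hi.1 hi.2]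
  have hτj : τ j = σ x := by rw [hτ, Perm.mul_apply, swap_apply_left]
  have hτx : τ x = x := by rw [hτ, Perm.mul_apply, swap_apply_right, hσj]
  have hexch := hG hxj hxσx
  calc ∑ i, G i i ≤ ∑ i, G i (τ i) := ih _ (Perm.card_support_swap_mul hx) τ rfl
    _ ≤ ∑ i, G i (σ i) := by
      rw [split fun i => G i (τ i), split fun i => G i (σ i), hcompl, hτj, hτx, hσj]
      linarith

theorem sum_le_sum_apply_antitone (hG : IsMonge G) {ρ : Perm ι} (hρ : Antitone ρ) (σ : Perm ι) :
    ∑ i, G i (σ i) ≤ ∑ i, G i (ρ i) := by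
  have hG' : IsMonge fun i k => -G i (ρ k) := fun i j k l hij hkl => by
    have := hG hij (hρ hkl); linarith
  have := hG'.sum_apply_self_le (ρ⁻¹ * σ)
  simpa only [Perm.mul_apply, Perm.coe_inv, apply_symm_apply, sum_neg_distrib, neg_le_neg_iff]
    using this

end IsMonge

section Sorting

variable {n : ℕ} (f : ℝ → ℝ → ℝ) (a b : Fin n → ℝ)

theorem sum_comp_perm_eq_sum_ascSort (π : Perm (Fin n)) :
    ∑ i, f (a i) (b (π i)) =
      ∑ i, f (ascSort a i) (ascSort b (((Tuple.sort b)⁻¹ * π * Tuple.sort a) i)) := by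
  rw [← Equiv.sum_comp (Tuple.sort a)]
  simp [ascSort]

theorem sum_descSort_eq_sum_ascSort :
    ∑ i, f (descSort a i) (descSort b i) = ∑ i, f (ascSort a i) (ascSort b i) :=
  Equiv.sum_comp Fin.revPerm fun i => f (ascSort a i) (ascSort b i)

variable {f a b}

theorem sum_descSort_le_sum_comp_perm (hf : IsMonge fun i k => f (ascSort a i) (ascSort b k))
    (π : Perm (Fin n)) :
    ∑ i, f (descSort a i) (descSort b i) ≤ ∑ i, f (a i) (b (π i)) := by
  rw [sum_descSort_eq_sum_ascSort, sum_comp_perm_eq_sum_ascSort]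
  exact hf.sum_apply_self_le _

theorem sum_comp_perm_le_sum_ascSort_descSort
    (hf : IsMonge fun i k => f (ascSort a i) (ascSort b k)) (π : Perm (Fin n)) :
    ∑ i, f (a i) (b (π i)) ≤ ∑ i, f (ascSort a i) (descSort b i) := by
  rw [sum_comp_perm_eq_sum_ascSort]
  exact hf.sum_le_sum_apply_antitone (ρ := Fin.revPerm) Fin.rev_anti _

end Sorting

theorem scalar_rearrangement_extremizers {n : ℕ} (a b : Fin n → ℝ)
    (ha0 : ∀ i, 0 ≤ a i) (hb0 : ∀ i, 0 ≤ b i) (p : ℝ) :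
    (1 ≤ p → p ≤ 2 → ∀ π : Equiv.Perm (Fin n),
      ((∑ i, (|descSort a i + descSort b i| ^ p + |descSort a i - descSort b i| ^ p)) ≤
        ∑ i, (|a i + b (π i)| ^ p + |a i - b (π i)| ^ p)) ∧
      ((∑ i, (|a i + b (π i)| ^ p + |a i - b (π i)| ^ p)) ≤
        ∑ i, (|ascSort a i + descSort b i| ^ p + |ascSort a i - descSort b i| ^ p))) ∧
    (2 ≤ p → ∀ π : Equiv.Perm (Fin n),
      ((∑ i, (|ascSort a i + descSort b i| ^ p + |ascSort a i - descSort b i| ^ p)) ≤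
        ∑ i, (|a i + b (π i)| ^ p + |a i - b (π i)| ^ p)) ∧
      ((∑ i, (|a i + b (π i)| ^ p + |a i - b (π i)| ^ p)) ≤
        ∑ i, (|descSort a i + descSort b i| ^ p + |descSort a i - descSort b i| ^ p))) := by
  have hA : Monotone (ascSort a) := Tuple.monotone_sort a
  have hB : Monotone (ascSort b) := Tuple.monotone_sort b
  have hA₀ : ∀ i, 0 ≤ ascSort a i := fun i => ha0 _
  have hB₀ : ∀ i, 0 ≤ ascSort b i := fun i => hb0 _
  refine ⟨fun hp₁ hp₂ π => ?_, fun hp π => ?_⟩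
  · have hG : IsMonge fun i k => addSubRpow p (ascSort a i) (ascSort b k) :=
      fun i j k l hij hkl => addSubRpow_exchange_le hp₁ hp₂ (hA₀ i) (hA hij) (hB₀ k) (hB hkl)
    exact ⟨sum_descSort_le_sum_comp_perm hG π, sum_comp_perm_le_sum_ascSort_descSort hG π⟩
  · have hG : IsMonge fun i k => -addSubRpow p (ascSort a i) (ascSort b k) :=
      fun i j k l hij hkl => by
        have := addSubRpow_exchange_ge hp (hA₀ i) (hA hij) (hB₀ k) (hB hkl)
        dsimp only
        linarith
    have h₁ := sum_descSort_le_sum_comp_perm (f := fun x y => -addSubRpow p x y) hG π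
    have h₂ := sum_comp_perm_le_sum_ascSort_descSort (f := fun x y => -addSubRpow p x y) hG π
    simp only [sum_neg_distrib, neg_le_neg_iff] at h₁ h₂
    exact ⟨h₂, h₁⟩
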